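/- arXiv:2411.13067 — 2 statements merged into one kernel-verified Lean document; each statement's English description precedes it below -/
import Mathlib

section
/- Let $g(\rho) = \rho(M - \rho)$ with $M > 0$. Suppose $\lambda \ge 0$ pointwise, $0 \le \rho' \le M$ pointwise, $g(\rho) \ge 0$ pointwise (i.e. $0\le\rho\le M$), and $\lambda\, g(\rho) = 0$ pointwise. Then for the weighted discrete inner product, $-[\rho - \rho', \lambda\, g'(\rho)] \ge 0$, where $g'(\rho) = M - 2\rho$. -/
open Finset

/-- Bound-preserving KKT monotonicity with g(ρ) = ρ(M-ρ). -/
theorem bound_kkt_monotone {ι : Type*} [Fintype ι] (β : ι → ℝ) (hβ : ∀ z, 0 < β z)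
    (M : ℝ) (hM : 0 < M) (lam rho rho' : ι → ℝ)
    (hlam : ∀ z, 0 ≤ lam z)
    (hrho' : ∀ z, 0 ≤ rho' z ∧ rho' z ≤ M)
    (hg : ∀ z, 0 ≤ rho z * (M - rho z))
    (hcomp : ∀ z, lam z * (rho z * (M - rho z)) = 0) :
    0 ≤ -(∑ z, β z * (rho z - rho' z) * (lam z * (M - 2 * rho z))) := by
  rw [← Finset.sum_neg_distrib]
  apply Finset.sum_nonneg
  intro z _
  have hb := hβ z
  have hl := hlam z
  have h1 := (hrho' z).1
  have h2 := (hrho' z).2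
  have hc := hcomp z
  nlinarith [mul_nonneg hl (sq_nonneg (rho z - rho' z)), mul_nonneg (mul_nonneg hl h1) (sub_nonneg.2 h2), sq_nonneg (rho z - rho' z)]
end

section
/- Let $g(\rho)=\rho(M-\rho)$ with $M>0$. Let $\lambda \ge 0$ pointwise with $\lambda g(\rho)=0$ pointwise and $0\le\rho\le M$ pointwise, and let $\xi = -[\lambda, M-2\rho]/[1,1]$. Then $-[\rho, \lambda g'(\rho) + \xi] \ge 0$. -/
open Finset

/-- Sign result for the bound-preserving multiplier pair (λ, ξ). -/
theorem bound_xi_sign {ι : Type*} [Fintype ι] [Nonempty ι] (β : ι → ℝ) (hβ : ∀ z, 0 < β z)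
    (M : ℝ) (hM : 0 < M) (lam rho : ι → ℝ) (ξ : ℝ)
    (hlam : ∀ z, 0 ≤ lam z)
    (hrho : ∀ z, 0 ≤ rho z ∧ rho z ≤ M)
    (hcomp : ∀ z, lam z * (rho z * (M - rho z)) = 0)
    (hξ : ξ = -(∑ z, β z * lam z * (M - 2 * rho z)) / (∑ z, β z * 1 * 1)) :
    0 ≤ -(∑ z, β z * rho z * (lam z * (M - 2 * rho z) + ξ)) := by
  have hB : 0 < ∑ z : ι, β z * 1 * 1 := by
    refine Finset.sum_pos (fun z _ => by simpa using hβ z) Finset.univ_nonempty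
  set B := ∑ z : ι, β z * 1 * 1 with hBdef
  set A := ∑ z : ι, β z * lam z with hAdef
  set C := ∑ z : ι, β z * (lam z * rho z) with hCdef
  set P := ∑ z : ι, β z * rho z with hPdef
  have hA : 0 ≤ A := Finset.sum_nonneg fun z _ => mul_nonneg (hβ z).le (hlam z)
  have hC : 0 ≤ C := Finset.sum_nonneg fun z _ =>
    mul_nonneg (hβ z).le (mul_nonneg (hlam z) (hrho z).1)
  have hP : 0 ≤ P := Finset.sum_nonneg fun z _ => mul_nonneg (hβ z).le (hrho z).1
  have hPB : P ≤ M * B := by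
    rw [hPdef, hBdef, Finset.mul_sum]
    refine Finset.sum_le_sum fun z _ => ?_
    nlinarith [(hrho z).2, (hβ z).le]
  have hCA : C ≤ M * A := by
    rw [hCdef, hAdef, Finset.mul_sum]
    refine Finset.sum_le_sum fun z _ => ?_
    have h1 := mul_nonneg (hlam z) (sub_nonneg.2 (hrho z).2)
    nlinarith [(hβ z).le]
  have hS : ∑ z : ι, β z * lam z * (M - 2 * rho z) = M * A - 2 * C := by
    rw [hAdef, hCdef, Finset.mul_sum, Finset.mul_sum, ← Finset.sum_sub_distrib]
    exact Finset.sum_congr rfl fun z _ => by ring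
  have hG : ∑ z : ι, β z * rho z * (lam z * (M - 2 * rho z) + ξ) = -M * C + ξ * P := by
    rw [hCdef, hPdef, Finset.mul_sum, Finset.mul_sum, ← Finset.sum_add_distrib]
    refine Finset.sum_congr rfl fun z _ => ?_
    linear_combination 2 * β z * hcomp z
  rw [hG, hξ, hS]
  have hkey : 0 ≤ M * C * B + (M * A - 2 * C) * P := by
    nlinarith [mul_nonneg hC (sub_nonneg.2 hPB), mul_nonneg hP (sub_nonneg.2 hCA)]
  have heq : -(-M * C + -(M * A - 2 * C) / B * P) = (M * C * B + (M * A - 2 * C) * P) / B := by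
    field_simp
    ring
  rw [heq]
  exact div_nonneg hkey hB.le
end
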